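/- For all t with -1 < t < 1, ∫_{-∞}^{∞} z² e^{tz} e^{-z}/(1 + e^{-z})^2 dz = (1/2)π² csc(πt)³ (πt(3 + cos(2πt)) - 2 sin(2πt)), understood via analytic continuation at t = 0. -/

import Mathlib

/-!
Let `M` be the moment generating function of the logistic law, whose density `w` is the
derivative of the sigmoid `σ`. The substitution `x = σ z`, under which `e^{sz} = x^s (1-x)^{-s}`,
turns `M s` into the Beta integral `B(1+s, 1-s) = Γ(1+s) Γ(1-s)`, so Euler's reflection formula
gives `M s * sin (π s) = π s` on `(-1, 1)`. The integral in question is `M'' t`. Differentiating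
this identity twice (Leibniz) and solving for `M'' t` gives the formula when `sin (π t) ≠ 0`; at
`t = 0` the third derivative of the identity reads `3π M''(0) = π³ M(0)`, and `M(0) = 1`.
-/

open Real MeasureTheory Set Filter ProbabilityTheory

noncomputable def logisticDensity (z : ℝ) : ℝ := exp (-z) / (1 + exp (-z)) ^ 2

lemma logisticDensity_eq_sigmoid_mul (z : ℝ) :
    logisticDensity z = sigmoid z * (1 - sigmoid z) := by
  rw [logisticDensity, sigmoid_def]
  field_simp
  ring

lemma logisticDensity_nonneg (z : ℝ) : 0 ≤ logisticDensity z := by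
  unfold logisticDensity; positivity

lemma measurable_logisticDensity : Measurable logisticDensity := by
  unfold logisticDensity; fun_prop

lemma logisticDensity_neg (z : ℝ) : logisticDensity (-z) = logisticDensity z := by
  simp only [logisticDensity_eq_sigmoid_mul, sigmoid_neg]
  ring

lemma logisticDensity_le_exp_neg (z : ℝ) : logisticDensity z ≤ exp (-z) :=
  div_le_self (exp_pos _).le (one_le_pow₀ (le_add_of_nonneg_right (exp_pos _).le))

lemma logisticDensity_le_exp (z : ℝ) : logisticDensity z ≤ exp z := by
  simpa [logisticDensity_neg] using logisticDensity_le_exp_neg (-z)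

lemma integrable_exp_mul_mul_logisticDensity {s : ℝ} (hs : s ∈ Ioo (-1 : ℝ) 1) :
    Integrable fun z ↦ exp (s * z) * logisticDensity z := by
  have bound : ∀ c z, logisticDensity z ≤ exp (c * z) →
      ‖exp (s * z) * logisticDensity z‖ ≤ exp ((s + c) * z) := fun c z h ↦ by
    rw [norm_of_nonneg (by positivity [logisticDensity_nonneg z]), add_mul, exp_add]
    gcongr
  have hmeas : AEStronglyMeasurable (fun z ↦ exp (s * z) * logisticDensity z) :=
    ((by fun_prop : Measurable fun z ↦ exp (s * z)).mul
      measurable_logisticDensity).aestronglyMeasurable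
  have hIic : IntegrableOn (fun z ↦ exp (s * z) * logisticDensity z) (Iic 0) :=
    (integrableOn_exp_mul_Iic (by linarith [hs.1]) 0).mono' hmeas.restrict
      (.of_forall fun z ↦ bound 1 z (by simpa using logisticDensity_le_exp z))
  have hIoi : IntegrableOn (fun z ↦ exp (s * z) * logisticDensity z) (Ioi 0) :=
    (integrableOn_exp_mul_Ioi (by linarith [hs.2]) 0).mono' hmeas.restrict
      (.of_forall fun z ↦ bound (-1) z (by simpa using logisticDensity_le_exp_neg z))
  rw [← integrableOn_univ, ← Iic_union_Ioi (a := 0)]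
  exact hIic.union hIoi

lemma integral_comp_sigmoid_mul_logisticDensity (g : ℝ → ℝ) :
    ∫ z, g (sigmoid z) * logisticDensity z = ∫ x in Ioo 0 1, g x := by
  have h := integral_image_eq_integral_abs_deriv_smul MeasurableSet.univ
    (fun z _ ↦ (hasDerivAt_sigmoid z).hasDerivWithinAt) sigmoid_injective.injOn g
  rw [image_univ, range_sigmoid, Measure.restrict_univ] at h
  simp_rw [h, ← logisticDensity_eq_sigmoid_mul, abs_of_nonneg (logisticDensity_nonneg _),
    smul_eq_mul, mul_comm]

lemma exp_mul_eq_sigmoid_rpow_mul (s z : ℝ) :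
    exp (s * z) = sigmoid z ^ s * (1 - sigmoid z) ^ (-s) := by
  rw [← sigmoid_neg, rpow_neg (sigmoid_nonneg _), ← div_eq_mul_inv,
    ← div_rpow (sigmoid_nonneg _) (sigmoid_nonneg _), ← sigmoid_mul_rexp_neg,
    div_mul_cancel_left₀ (sigmoid_pos z).ne', exp_neg, inv_inv, mul_comm, exp_mul]

lemma integral_Ioo_rpow_mul_one_sub_rpow {a b : ℝ} (ha : 0 < a) (hb : 0 < b) :
    ∫ x in Ioo (0 : ℝ) 1, x ^ (a - 1) * (1 - x) ^ (b - 1) = beta a b := by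
  rw [beta_eq_betaIntegralReal a b ha hb, Complex.betaIntegral,
    intervalIntegral.integral_of_le zero_le_one, ← integral_Ioc_eq_integral_Ioo,
    ← RCLike.re_to_complex, ← integral_re]
  · refine setIntegral_congr_fun measurableSet_Ioc fun x ⟨hx0, hx1⟩ ↦ ?_
    norm_cast
    rw [← Complex.ofReal_cpow hx0.le, ← Complex.ofReal_cpow (by linarith), RCLike.re_to_complex,
      ← Complex.ofReal_mul, Complex.ofReal_re]
  · have := Complex.betaIntegral_convergent (u := a) (v := b) (by simpa) (by simpa)
    rwa [intervalIntegrable_iff_integrableOn_Ioc_of_le zero_le_one] at this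

lemma Gamma_one_add_mul_Gamma_one_sub {s : ℝ} (hs : sin (π * s) ≠ 0) :
    Gamma (1 + s) * Gamma (1 - s) = π * s / sin (π * s) := by
  have hs0 : s ≠ 0 := by rintro rfl; simp at hs
  rw [add_comm, Gamma_add_one hs0, mul_assoc, Gamma_mul_Gamma_one_sub]
  ring

lemma sin_pi_mul_ne_zero_of_mem_Ioo {s : ℝ} (hs : s ∈ Ioo (-1 : ℝ) 1) (h0 : s ≠ 0) :
    sin (π * s) ≠ 0 := by
  rw [Ne, sin_eq_zero_iff_of_lt_of_lt (by nlinarith [pi_pos, hs.1]) (by nlinarith [pi_pos, hs.2])]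
  exact mul_ne_zero pi_ne_zero h0

lemma ProbabilityTheory.hasDerivAt_iteratedDeriv_mgf_succ {Ω : Type*} {mΩ : MeasurableSpace Ω}
    {X : Ω → ℝ} {μ : Measure Ω} {t : ℝ} (ht : t ∈ interior (integrableExpSet X μ)) (k : ℕ) :
    HasDerivAt (iteratedDeriv k (mgf X μ)) (iteratedDeriv (k + 1) (mgf X μ) t) t := by
  rw [iteratedDeriv_succ]
  exact (differentiableAt_iteratedDeriv_mgf ht k).hasDerivAt

theorem Set.EqOn.eqOn_of_hasDerivAt {f g f' g' : ℝ → ℝ} {U : Set ℝ} (hfg : EqOn f g U)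
    (hU : IsOpen U) (hf : ∀ x ∈ U, HasDerivAt f (f' x) x)
    (hg : ∀ x ∈ U, HasDerivAt g (g' x) x) : EqOn f' g' U := fun x hx ↦
  (hf x hx).unique ((hg x hx).congr_of_eventuallyEq (hfg.eventuallyEq_of_mem (hU.mem_nhds hx)))

theorem HasDerivAt.mul_sin_const_mul {f : ℝ → ℝ} {f' x : ℝ} (c : ℝ) (hf : HasDerivAt f f' x) :
    HasDerivAt (fun y ↦ f y * Real.sin (c * y))
      (f' * Real.sin (c * x) + c * (f x * Real.cos (c * x))) x :=
  (hf.fun_mul ((hasDerivAt_id' x).const_mul c).sin).congr_deriv (by ring)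

theorem HasDerivAt.mul_cos_const_mul {f : ℝ → ℝ} {f' x : ℝ} (c : ℝ) (hf : HasDerivAt f f' x) :
    HasDerivAt (fun y ↦ f y * Real.cos (c * y))
      (f' * Real.cos (c * x) - c * (f x * Real.sin (c * x))) x :=
  (hf.fun_mul ((hasDerivAt_id' x).const_mul c).cos).congr_deriv (by ring)

noncomputable def logisticMeasure : Measure ℝ :=
  volume.withDensity fun z ↦ ENNReal.ofReal (logisticDensity z)

local notation "M" => mgf id logisticMeasure

lemma integral_logisticMeasure (f : ℝ → ℝ) :
    ∫ z, f z ∂logisticMeasure = ∫ z, f z * logisticDensity z := by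
  rw [logisticMeasure, integral_withDensity_eq_integral_toReal_smul
    measurable_logisticDensity.ennreal_ofReal (.of_forall fun _ ↦ ENNReal.ofReal_lt_top)]
  simp_rw [ENNReal.toReal_ofReal (logisticDensity_nonneg _), smul_eq_mul, mul_comm]

lemma integrable_logisticMeasure_iff {f : ℝ → ℝ} :
    Integrable f logisticMeasure ↔ Integrable fun z ↦ f z * logisticDensity z := by
  rw [logisticMeasure, integrable_withDensity_iff measurable_logisticDensity.ennreal_ofReal
    (.of_forall fun _ ↦ ENNReal.ofReal_lt_top)]
  simp_rw [ENNReal.toReal_ofReal (logisticDensity_nonneg _)]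

lemma Ioo_subset_interior_integrableExpSet_logisticMeasure :
    Ioo (-1 : ℝ) 1 ⊆ interior (integrableExpSet id logisticMeasure) :=
  interior_maximal (fun _ hs ↦ integrable_logisticMeasure_iff.2
    (integrable_exp_mul_mul_logisticDensity hs)) isOpen_Ioo

lemma iteratedDeriv_mgf_logisticMeasure {s : ℝ} (hs : s ∈ Ioo (-1 : ℝ) 1) (k : ℕ) :
    iteratedDeriv k M s = ∫ z, z ^ k * exp (s * z) * logisticDensity z := by
  rw [iteratedDeriv_mgf (Ioo_subset_interior_integrableExpSet_logisticMeasure hs),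
    integral_logisticMeasure]
  rfl

lemma hasDerivAt_iteratedDeriv_mgf_logisticMeasure {s : ℝ} (hs : s ∈ Ioo (-1 : ℝ) 1) (k : ℕ) :
    HasDerivAt (iteratedDeriv k M) (iteratedDeriv (k + 1) M s) s :=
  hasDerivAt_iteratedDeriv_mgf_succ (Ioo_subset_interior_integrableExpSet_logisticMeasure hs) k

lemma mgf_logisticMeasure {s : ℝ} (hs : s ∈ Ioo (-1 : ℝ) 1) :
    M s = Gamma (1 + s) * Gamma (1 - s) := by
  have hbeta := integral_Ioo_rpow_mul_one_sub_rpow (a := 1 + s) (b := 1 - s)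
    (by linarith [hs.1]) (by linarith [hs.2])
  rw [beta, show 1 + s + (1 - s) = 2 by ring, Gamma_two, div_one] at hbeta
  rw [mgf, integral_logisticMeasure, ← hbeta, ← integral_comp_sigmoid_mul_logisticDensity]
  simp_rw [id, exp_mul_eq_sigmoid_rpow_mul s, add_sub_cancel_left, sub_sub_cancel_left]

lemma mgf_logisticMeasure_mul_sin {s : ℝ} (hs : s ∈ Ioo (-1 : ℝ) 1) :
    M s * sin (π * s) = π * s := by
  rcases eq_or_ne s 0 with rfl | h0
  · simp
  · have h := sin_pi_mul_ne_zero_of_mem_Ioo hs h0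
    rw [mgf_logisticMeasure hs, Gamma_one_add_mul_Gamma_one_sub h, div_mul_cancel₀ _ h]

lemma mgf_logisticMeasure_mul_sin_deriv_one :
    EqOn (fun s ↦ iteratedDeriv 1 M s * sin (π * s) + π * (iteratedDeriv 0 M s * cos (π * s)))
      (fun _ ↦ π) (Ioo (-1) 1) := by
  have h := EqOn.eqOn_of_hasDerivAt (fun s hs ↦ by simpa using mgf_logisticMeasure_mul_sin hs)
    isOpen_Ioo (fun s hs ↦ (hasDerivAt_iteratedDeriv_mgf_logisticMeasure hs 0).mul_sin_const_mul π)
    (fun s _ ↦ (hasDerivAt_id s).const_mul π)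
  simpa using h

lemma mgf_logisticMeasure_mul_sin_deriv_two :
    EqOn (fun s ↦ iteratedDeriv 2 M s * sin (π * s) + 2 * π * (iteratedDeriv 1 M s * cos (π * s))
      - π ^ 2 * (iteratedDeriv 0 M s * sin (π * s))) (fun _ ↦ 0) (Ioo (-1) 1) :=
  mgf_logisticMeasure_mul_sin_deriv_one.eqOn_of_hasDerivAt isOpen_Ioo
    (fun s hs ↦ (((hasDerivAt_iteratedDeriv_mgf_logisticMeasure hs 1).mul_sin_const_mul π).add
      (((hasDerivAt_iteratedDeriv_mgf_logisticMeasure hs 0).mul_cos_const_mul π).const_mul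
        π)).congr_deriv (by ring))
    (fun s _ ↦ hasDerivAt_const s π)

lemma mgf_logisticMeasure_mul_sin_deriv_three :
    EqOn (fun s ↦ iteratedDeriv 3 M s * sin (π * s) + 3 * π * (iteratedDeriv 2 M s * cos (π * s))
      - 3 * π ^ 2 * (iteratedDeriv 1 M s * sin (π * s))
      - π ^ 3 * (iteratedDeriv 0 M s * cos (π * s))) (fun _ ↦ 0) (Ioo (-1) 1) :=
  mgf_logisticMeasure_mul_sin_deriv_two.eqOn_of_hasDerivAt isOpen_Ioo
    (fun s hs ↦ ((((hasDerivAt_iteratedDeriv_mgf_logisticMeasure hs 2).mul_sin_const_mul π).add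
      (((hasDerivAt_iteratedDeriv_mgf_logisticMeasure hs 1).mul_cos_const_mul π).const_mul
        (2 * π))).sub
      (((hasDerivAt_iteratedDeriv_mgf_logisticMeasure hs 0).mul_sin_const_mul π).const_mul
        (π ^ 2))).congr_deriv (by ring))
    (fun s _ ↦ hasDerivAt_const s (0 : ℝ))

lemma eq_of_leibniz_mul_sin {u a₀ a₁ a₂ : ℝ} (hS : sin u ≠ 0) (h₀ : a₀ * sin u = u)
    (h₁ : a₁ * sin u + π * (a₀ * cos u) = π)
    (h₂ : a₂ * sin u + 2 * π * (a₁ * cos u) - π ^ 2 * (a₀ * sin u) = 0) :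
    a₂ = 1 / 2 * π ^ 2 * (1 / sin u) ^ 3 * (u * (3 + cos (2 * u)) - 2 * sin (2 * u)) := by
  rw [cos_two_mul, sin_two_mul]
  field_simp
  linear_combination 2 * sin u ^ 2 * h₂ - 4 * π * sin u * cos u * h₁ +
    (2 * π ^ 2 * sin u ^ 2 + 4 * π ^ 2 * cos u ^ 2) * h₀ + 2 * π ^ 2 * u * sin_sq_add_cos_sq u

theorem logistic_second_moment_mgf (t : ℝ) (h1 : -1 < t) (h2 : t < 1) :
    ∫ z : ℝ, z ^ 2 * Real.exp (t * z) * (Real.exp (-z) / (1 + Real.exp (-z)) ^ 2)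
      = if t = 0 then π ^ 2 / 3
        else (1 / 2) * π ^ 2 * (1 / Real.sin (π * t)) ^ 3 *
          (π * t * (3 + Real.cos (2 * π * t)) - 2 * Real.sin (2 * π * t)) := by
  have ht : t ∈ Ioo (-1 : ℝ) 1 := ⟨h1, h2⟩
  change ∫ z, z ^ 2 * exp (t * z) * logisticDensity z = _
  rw [← iteratedDeriv_mgf_logisticMeasure ht 2]
  split_ifs with h0
  · subst h0
    have hM : iteratedDeriv 0 M 0 = 1 := by
      simpa [pi_ne_zero] using mgf_logisticMeasure_mul_sin_deriv_one ht
    have h₃ := mgf_logisticMeasure_mul_sin_deriv_three ht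
    simp only [mul_zero, sin_zero, cos_zero, mul_one, sub_zero, zero_add, hM] at h₃
    field_simp
    exact mul_left_cancel₀ pi_ne_zero (by linear_combination h₃)
  · rw [mul_assoc 2 π t]
    exact eq_of_leibniz_mul_sin (sin_pi_mul_ne_zero_of_mem_Ioo ht h0)
      (mgf_logisticMeasure_mul_sin ht) (mgf_logisticMeasure_mul_sin_deriv_one ht)
      (mgf_logisticMeasure_mul_sin_deriv_two ht)
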